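/- Let 0 < α < θ < 1 - α < 1 and suppose t0 = ⌊Tθ⌋. Define r(t) = -t(T - t0)/T + (t - t0)·1{t > t0}. Then there exist constants 0 < c2 ≤ c1 < ∞ (depending only on α and θ) such that for all T sufficiently large and all integers t with 1 ≤ t ≤ T, -c1·|t0 - t|·T ≤ r(t)² - r(t0)² ≤ -c2·|t0 - t|·T. -/

import Mathlib

/-!
On either side of `t0` the drift is linear: `r t = -t (T - t0) / T` for `t ≤ t0` and
`r t = -t0 (T - t) / T` for `t > t0`. Hence `r t ^ 2 - r t0 ^ 2 = -|t0 - t| * w` with weight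
`w = (t0 + t) (T - t0)² / T²`, resp. `w = t0² (2T - t - t0) / T²`. Since `t0 ≈ θ T` with `θ` away
from `0` and `1`, both weights lie between `θ² (1 - θ)² T / 4` and `2 T`.
-/

/-- The drift function r(t) = -t(T - t0)/T + (t - t0)·1{t > t0}. -/
noncomputable def rfun (T t0 : ℕ) (t : ℝ) : ℝ :=
  -(t * ((T : ℝ) - (t0 : ℝ)) / (T : ℝ)) + (t - (t0 : ℝ)) * (if (t0 : ℝ) < t then 1 else 0)

section ClosedForm

variable {T t0 : ℕ} {x : ℝ}

lemma rfun_of_le (h : x ≤ t0) : rfun T t0 x = -(x * (T - t0) / T) := by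
  rw [rfun, if_neg h.not_gt, mul_zero, add_zero]

lemma rfun_of_gt (hT : (T : ℝ) ≠ 0) (h : (t0 : ℝ) < x) : rfun T t0 x = -(t0 * (T - x) / T) := by
  rw [rfun, if_pos h]
  field_simp
  ring

lemma rfun_sq_sub_rfun_sq_of_le (h : x ≤ t0) :
    rfun T t0 x ^ 2 - rfun T t0 t0 ^ 2 = -|(t0 : ℝ) - x| * ((t0 + x) * (T - t0) ^ 2 / T ^ 2) := by
  rw [rfun_of_le h, rfun_of_le le_rfl, abs_of_nonneg (sub_nonneg.2 h)]
  ring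

lemma rfun_sq_sub_rfun_sq_of_gt (hT : (T : ℝ) ≠ 0) (h : (t0 : ℝ) < x) :
    rfun T t0 x ^ 2 - rfun T t0 t0 ^ 2 = -|(t0 : ℝ) - x| * (t0 ^ 2 * (2 * T - x - t0) / T ^ 2) := by
  rw [rfun_of_gt hT h, rfun_of_le le_rfl, abs_of_neg (sub_neg.2 h)]
  field_simp
  ring

end ClosedForm

section Weights

variable {θ n s x : ℝ}

lemma weight_bounds_of_le (hθ1 : θ ≤ 1) (hn : 0 ≤ n) (hs : s ≤ n * θ)
    (hsx : n * θ ≤ s + x) (hxs : x ≤ s) :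
    θ * (1 - θ) ^ 2 * n ^ 3 ≤ (s + x) * (n - s) ^ 2 ∧ (s + x) * (n - s) ^ 2 ≤ 2 * n ^ 3 := by
  have hnθ : n * θ ≤ n := mul_le_of_le_one_right hn hθ1
  constructor
  · calc θ * (1 - θ) ^ 2 * n ^ 3 = (n * θ) * ((1 - θ) * n) ^ 2 := by ring
      _ ≤ (s + x) * (n - s) ^ 2 := by
        gcongr <;> linarith
  · calc (s + x) * (n - s) ^ 2 ≤ (2 * n) * n ^ 2 := by
          gcongr <;> linarith
      _ = 2 * n ^ 3 := by ring

lemma weight_bounds_of_gt (hθ0 : 0 ≤ θ) (hθ1 : θ ≤ 1) (hn : 0 ≤ n) (hs : n * θ / 2 ≤ s)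
    (hs' : s ≤ n * θ) (hsx : s ≤ x) (hxn : x ≤ n) :
    θ ^ 2 * (1 - θ) / 4 * n ^ 3 ≤ s ^ 2 * (2 * n - x - s) ∧ s ^ 2 * (2 * n - x - s) ≤ 2 * n ^ 3 := by
  have hnθ : n * θ ≤ n := mul_le_of_le_one_right hn hθ1
  have hs0 : 0 ≤ s := le_trans (by positivity) hs
  constructor
  · calc θ ^ 2 * (1 - θ) / 4 * n ^ 3 = (n * θ / 2) ^ 2 * ((1 - θ) * n) := by ring
      _ ≤ s ^ 2 * (2 * n - x - s) := by
        gcongr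
        linarith
  · calc s ^ 2 * (2 * n - x - s) ≤ n ^ 2 * (2 * n) := by
          gcongr <;> linarith
      _ = 2 * n ^ 3 := by ring

end Weights

lemma rfun_sq_sub_rfun_sq_eq_neg_abs_mul {T t0 : ℕ} {θ x : ℝ} (hT : (0 : ℝ) < T) (hθ0 : 0 ≤ θ)
    (hθ1 : θ ≤ 1) (ht0 : T * θ / 2 ≤ t0) (ht0' : (t0 : ℝ) ≤ T * θ) (ht0x : T * θ ≤ t0 + x)
    (hxT : x ≤ T) :
    ∃ w, θ ^ 2 * (1 - θ) ^ 2 / 4 * T ≤ w ∧ w ≤ 2 * T ∧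
      rfun T t0 x ^ 2 - rfun T t0 t0 ^ 2 = -|(t0 : ℝ) - x| * w := by
  have hT2 : (0 : ℝ) < (T : ℝ) ^ 2 := by positivity
  rcases le_or_gt x t0 with h | h
  · obtain ⟨hlo, hhi⟩ := weight_bounds_of_le hθ1 hT.le ht0' ht0x h
    refine ⟨_, ?_, ?_, rfun_sq_sub_rfun_sq_of_le h⟩
    · rw [le_div_iff₀ hT2]
      nlinarith [mul_nonneg (mul_nonneg hθ0 (sq_nonneg (1 - θ))) (pow_pos hT 3).le]
    · rw [div_le_iff₀ hT2]
      linarith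
  · obtain ⟨hlo, hhi⟩ := weight_bounds_of_gt hθ0 hθ1 hT.le ht0 ht0' h.le hxT
    refine ⟨_, ?_, ?_, rfun_sq_sub_rfun_sq_of_gt hT.ne' h⟩
    · rw [le_div_iff₀ hT2]
      nlinarith [mul_nonneg (mul_nonneg (sq_nonneg θ) hθ0) (pow_pos hT 3).le]
    · rw [div_le_iff₀ hT2]
      linarith

theorem stmt_1_general (θ α : ℝ) (hα : 0 < α) (hαθ : α < θ) (hθ : θ < 1 - α) :
    ∃ c1 c2 : ℝ, 0 < c2 ∧ c2 ≤ c1 ∧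
      ∃ T0 : ℕ, ∀ T : ℕ, T0 ≤ T →
        ∀ t : ℕ, 1 ≤ t → t ≤ T →
          -c1 * |((⌊(T : ℝ) * θ⌋₊ : ℝ)) - (t : ℝ)| * (T : ℝ)
              ≤ rfun T ⌊(T : ℝ) * θ⌋₊ (t : ℝ) ^ 2
                - rfun T ⌊(T : ℝ) * θ⌋₊ ((⌊(T : ℝ) * θ⌋₊ : ℕ) : ℝ) ^ 2 ∧
          rfun T ⌊(T : ℝ) * θ⌋₊ (t : ℝ) ^ 2
              - rfun T ⌊(T : ℝ) * θ⌋₊ ((⌊(T : ℝ) * θ⌋₊ : ℕ) : ℝ) ^ 2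
            ≤ -c2 * |((⌊(T : ℝ) * θ⌋₊ : ℝ)) - (t : ℝ)| * (T : ℝ) := by
  have hθ0 : 0 < θ := hα.trans hαθ
  have hθ1 : θ < 1 := by linarith
  have hθθ : 0 < θ * (1 - θ) := mul_pos hθ0 (sub_pos.2 hθ1)
  refine ⟨2, θ ^ 2 * (1 - θ) ^ 2 / 4, by positivity, by nlinarith, ⌈2 / θ⌉₊, ?_⟩
  intro T hT t ht1 htT
  have hTθ : 2 ≤ (T : ℝ) * θ := (div_le_iff₀ hθ0).1 (Nat.ceil_le.1 hT)
  have hfloor_le := Nat.floor_le (by positivity : 0 ≤ (T : ℝ) * θ)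
  have hfloor_gt := Nat.lt_floor_add_one ((T : ℝ) * θ)
  have ht : (1 : ℝ) ≤ t := by exact_mod_cast ht1
  obtain ⟨w, hw_lo, hw_hi, hD⟩ := rfun_sq_sub_rfun_sq_eq_neg_abs_mul (x := t) (by nlinarith)
    hθ0.le hθ1.le (by linarith) hfloor_le (by linarith) (by exact_mod_cast htT)
  rw [hD]
  have := abs_nonneg ((⌊(T : ℝ) * θ⌋₊ : ℝ) - t)
  constructor <;> nlinarith

theorem stmt_1 (θ α : ℝ) (hα : 0 < α) (hαθ : α < θ) (hθ : θ < 1 - α) (h1 : 1 - α < 1) :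
    ∃ c1 c2 : ℝ, 0 < c2 ∧ c2 ≤ c1 ∧
      ∃ T0 : ℕ, ∀ T : ℕ, T0 ≤ T →
        ∀ t : ℕ, 1 ≤ t → t ≤ T →
          -c1 * |((⌊(T : ℝ) * θ⌋₊ : ℝ)) - (t : ℝ)| * (T : ℝ)
              ≤ rfun T ⌊(T : ℝ) * θ⌋₊ (t : ℝ) ^ 2
                - rfun T ⌊(T : ℝ) * θ⌋₊ ((⌊(T : ℝ) * θ⌋₊ : ℕ) : ℝ) ^ 2 ∧
          rfun T ⌊(T : ℝ) * θ⌋₊ (t : ℝ) ^ 2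
              - rfun T ⌊(T : ℝ) * θ⌋₊ ((⌊(T : ℝ) * θ⌋₊ : ℕ) : ℝ) ^ 2
            ≤ -c2 * |((⌊(T : ℝ) * θ⌋₊ : ℝ)) - (t : ℝ)| * (T : ℝ) :=
  stmt_1_general θ α hα hαθ hθ
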